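/- For positive integers m and c, the classical Kloosterman sum satisfies the Vardi identity: ∑_{a=1, gcd(a,c)=1}^{c-1} e(12·m·s(a;c)) = S(m, m; c), where e(x) = e^{2πix}, s(a;c) is the Dedekind sum, and S(m,n;c) = ∑_{a: gcd(a,c)=1, ad ≡ 1 mod c} e((ma + nd)/c). -/

import Mathlib

open scoped Classical in
/-- The sawtooth function `((x))`. -/
noncomputable def sawtooth (x : ℝ) : ℝ :=
  if ∃ n : ℤ, (n : ℝ) = x then 0 else Int.fract x - 1/2

/-- The Dedekind sum `s(a;c)`. -/
noncomputable def dedekindSum (a c : ℤ) : ℝ :=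
  ∑ n ∈ Finset.Ico (1:ℤ) c, sawtooth ((n : ℝ) / c) * sawtooth ((n * a : ℝ) / c)

/-- `e(x) = exp(2π i x)`. -/
noncomputable def eTwoPi (x : ℝ) : ℂ := Complex.exp (2 * Real.pi * Complex.I * x)

/-- The classical Kloosterman sum `S(m,n;c)`, as a sum over `1 ≤ a ≤ c-1` with
`gcd(a,c) = 1`, where `d` denotes the inverse of `a` modulo `c`. -/
noncomputable def kloosterman (m n c : ℕ) : ℂ :=
  ∑ a ∈ (Finset.Ico 1 c).filter (fun a => Nat.gcd a c = 1),
    eTwoPi (((m * a : ℕ) : ℝ) / c + ((n * (((a : ZMod c)⁻¹).val) : ℕ) : ℝ) / c)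

/-! If `a d ≡ 1 (mod c)`, evaluating the sawtooth functions gives `4 c² s(a;c) = 4 T - c² (c - 1)`
with `T = ∑ n (n a mod c)`. Summing `(c ⌊n a / c⌋)² = (n a - (n a mod c))²` over `n`, and using that
`n ↦ n a mod c` permutes the nonzero residues, gives `a (12 T - c (a + d)) ≡ 0 (mod c²)`. So
`12 s(a;c) - (a + d) / c` is an integer, and each term `e(12 m s(a;c))` equals the term
`e(m (a + d) / c)` of `S(m, m; c)`. -/

open Finset

lemma eTwoPi_intCast_add (k : ℤ) (x : ℝ) : eTwoPi (k + x) = eTwoPi x := by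
  rw [eTwoPi, eTwoPi, Complex.ofReal_add, mul_add, Complex.exp_add, Complex.ofReal_intCast,
    mul_comm _ (k : ℂ), Complex.exp_int_mul_two_pi_mul_I, one_mul]

lemma sawtooth_intCast_div {x c : ℤ} (hc : 0 < c) (hx : ¬ c ∣ x) :
    sawtooth (x / c) = (x % c : ℤ) / c - 1 / 2 := by
  lift c to ℕ using hc.le
  have hfract : Int.fract ((x : ℝ) / (c : ℤ)) = (x % c : ℤ) / (c : ℤ) := by
    simpa using Int.fract_div_intCast_eq_div_intCast_mod (k := ℝ) (m := x) (n := c)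
  have hnotint : ¬ ∃ n : ℤ, (n : ℝ) = x / (c : ℤ) := by
    rintro ⟨n, hn⟩
    rw [← hn, Int.fract_intCast, eq_comm, div_eq_zero_iff, Int.cast_eq_zero] at hfract
    exact hx (Int.dvd_of_emod_eq_zero (hfract.resolve_right (by exact_mod_cast hc.ne')))
  rw [sawtooth, if_neg hnotint, hfract]

lemma emod_mul_mem_Ico_one {b c n : ℤ} (hbc : IsCoprime b c) (hn : n ∈ Ico 1 c) :
    n * b % c ∈ Ico 1 c := by
  rw [mem_Ico] at hn ⊢
  have hc : 0 < c := by omega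
  have hne : n * b % c ≠ 0 := fun h =>
    absurd (Int.le_of_dvd (by omega) (hbc.symm.dvd_of_dvd_mul_right (Int.dvd_of_emod_eq_zero h)))
      (by omega)
  have := Int.emod_nonneg (n * b) hc.ne'
  have := Int.emod_lt_of_pos (n * b) hc
  omega

lemma emod_mul_emod_mul_eq_self {a u v c n : ℤ} (huv : u * a + v * c = 1)
    (hn : n ∈ Ico 1 c) : n * a % c * u % c = n := by
  rw [mem_Ico] at hn
  have : n * a % c * u ≡ n [ZMOD c] :=
    calc n * a % c * u ≡ n * a * u [ZMOD c] := (Int.mod_modEq _ _).mul_right u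
      _ = n + c * (-(n * v)) := by linear_combination n * huv
      _ ≡ n [ZMOD c] := by simp [Int.ModEq]
  rw [this, Int.emod_eq_of_lt (by omega) hn.2]

lemma sum_Ico_one_emod_mul {M : Type*} [AddCommMonoid M] {a c : ℤ} (hac : IsCoprime a c)
    (g : ℤ → M) : ∑ n ∈ Ico 1 c, g (n * a % c) = ∑ n ∈ Ico 1 c, g n := by
  obtain ⟨u, v, huv⟩ := hac
  have hvu : a * u + v * c = 1 := by linear_combination huv
  exact sum_nbij' (fun n => n * a % c) (fun n => n * u % c)
    (fun _ => emod_mul_mem_Ico_one ⟨u, v, huv⟩) (fun _ => emod_mul_mem_Ico_one ⟨a, v, hvu⟩)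
    (fun _ => emod_mul_emod_mul_eq_self huv) (fun _ => emod_mul_emod_mul_eq_self hvu)
    (fun _ _ => rfl)

lemma two_mul_sum_Ico_one_id {c : ℤ} (hc : 1 ≤ c) : 2 * ∑ n ∈ Ico 1 c, n = c * (c - 1) := by
  induction c, hc using Int.leInduction with
  | base => simp
  | succ c hc ih => rw [← sum_Ico_add_eq_sum_Ico_add_one hc, mul_add, ih]; ring

lemma six_mul_sum_Ico_one_sq {c : ℤ} (hc : 1 ≤ c) :
    6 * ∑ n ∈ Ico 1 c, n ^ 2 = c * (c - 1) * (2 * c - 1) := by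
  induction c, hc using Int.leInduction with
  | base => simp
  | succ c hc ih => rw [← sum_Ico_add_eq_sum_Ico_add_one hc, mul_add, ih]; ring

lemma four_mul_sq_mul_dedekindSum {a c : ℤ} (hc : 0 < c) (hac : IsCoprime a c) :
    4 * c ^ 2 * dedekindSum a c
      = ((4 * ∑ n ∈ Ico 1 c, n * (n * a % c) - c ^ 2 * (c - 1) : ℤ) : ℝ) := by
  have hterm : ∀ n ∈ Ico 1 c, 4 * (c : ℝ) ^ 2 * (sawtooth (n / c) * sawtooth (n * a / c))
      = (((2 * n - c) * (2 * (n * a % c) - c) : ℤ) : ℝ) := by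
    intro n hn
    have hn' := mem_Ico.1 hn
    have hndvd : ¬ c ∣ n := fun h => absurd (Int.le_of_dvd (by omega) h) (by omega)
    have hnadvd : ¬ c ∣ n * a := fun h => hndvd (hac.symm.dvd_of_dvd_mul_right h)
    have hcR : (c : ℝ) ≠ 0 := by exact_mod_cast hc.ne'
    rw [← Int.cast_mul, sawtooth_intCast_div hc hndvd, sawtooth_intCast_div hc hnadvd,
      Int.emod_eq_of_lt (by omega) hn'.2]
    field_simp
    push_cast
    ring
  have hsum : ∑ n ∈ Ico 1 c, (2 * n - c) * (2 * (n * a % c) - c)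
      = 4 * ∑ n ∈ Ico 1 c, n * (n * a % c) - c ^ 2 * (c - 1) := by
    have hcard : ((Ico 1 c).card : ℤ) = c - 1 := by rw [Int.card_Ico]; omega
    have hexpand : ∑ n ∈ Ico 1 c, (2 * n - c) * (2 * (n * a % c) - c)
        = 4 * ∑ n ∈ Ico 1 c, n * (n * a % c) - 2 * c * ∑ n ∈ Ico 1 c, n
          - 2 * c * ∑ n ∈ Ico 1 c, n * a % c + (Ico 1 c).card * c ^ 2 := by
      rw [← nsmul_eq_mul, ← sum_const, mul_sum, mul_sum, mul_sum, ← sum_sub_distrib,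
        ← sum_sub_distrib, ← sum_add_distrib]
      exact sum_congr rfl fun n _ => by ring
    rw [hexpand, sum_Ico_one_emod_mul hac (fun x => x), hcard]
    linear_combination (-2 * c) * two_mul_sum_Ico_one_id hc
  rw [dedekindSum, mul_sum, sum_congr rfl hterm, ← Int.cast_sum, hsum]

lemma isCoprime_of_mul_modEq_one {a c d : ℤ} (had : a * d ≡ 1 [ZMOD c]) : IsCoprime a c := by
  obtain ⟨k, hk⟩ := had.symm.dvd
  exact ⟨d, -k, by linear_combination hk⟩

lemma sq_dvd_twelve_mul_sum_mul_emod_sub {a c d : ℤ} (hc : 0 < c) (had : a * d ≡ 1 [ZMOD c]) :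
    c ^ 2 ∣ 12 * ∑ n ∈ Ico 1 c, n * (n * a % c) - c * (a + d) := by
  obtain ⟨k, hk⟩ := had.symm.dvd
  have hac := isCoprime_of_mul_modEq_one had
  set T := ∑ n ∈ Ico 1 c, n * (n * a % c)
  set S := ∑ n ∈ Ico 1 c, n ^ 2
  set Q := ∑ n ∈ Ico 1 c, (n * a / c) ^ 2
  have hQ : c ^ 2 * Q = (a ^ 2 + 1) * S - 2 * a * T := by
    have hterm : ∀ n ∈ Ico 1 c, c ^ 2 * (n * a / c) ^ 2
        = a ^ 2 * n ^ 2 + (n * a % c) ^ 2 - 2 * a * (n * (n * a % c)) := fun n _ => by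
      linear_combination (c * (n * a / c) + n * a - n * a % c) * Int.mul_ediv_add_emod (n * a) c
    rw [mul_sum, sum_congr rfl hterm, sum_sub_distrib, sum_add_distrib,
      sum_Ico_one_emod_mul hac (fun x => x ^ 2), ← mul_sum, ← mul_sum]
    ring
  have hcop : IsCoprime (c ^ 2) a := hac.symm.pow_left
  refine hcop.dvd_of_dvd_mul_left ⟨(a ^ 2 + 1) * (2 * c - 3) - 6 * Q - k, ?_⟩
  linear_combination 6 * hQ + (a ^ 2 + 1) * six_mul_sum_Ico_one_sq hc - c * hk

lemma exists_twelve_mul_dedekindSum_eq {a c d : ℤ} (hc : 0 < c) (had : a * d ≡ 1 [ZMOD c]) :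
    ∃ k : ℤ, 12 * dedekindSum a c = k + (a + d) / c := by
  obtain ⟨w, hw⟩ := sq_dvd_twelve_mul_sum_mul_emod_sub hc had
  have hs := four_mul_sq_mul_dedekindSum hc (isCoprime_of_mul_modEq_one had)
  refine ⟨w - 3 * (c - 1), ?_⟩
  have hcR : (c : ℝ) ≠ 0 := by exact_mod_cast hc.ne'
  have hwR := congrArg (fun z : ℤ => (z : ℝ)) hw
  push_cast at hs hwR ⊢
  rw [← sub_eq_iff_eq_add', eq_div_iff hcR]
  apply mul_left_cancel₀ hcR
  linear_combination 3 * hs + hwR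

lemma eTwoPi_twelve_mul_dedekindSum {a c d : ℤ} (m : ℤ) (hc : 0 < c) (had : a * d ≡ 1 [ZMOD c]) :
    eTwoPi (12 * m * dedekindSum a c) = eTwoPi (m * (a + d) / c) := by
  obtain ⟨k, hk⟩ := exists_twelve_mul_dedekindSum_eq hc had
  calc eTwoPi (12 * m * dedekindSum a c) = eTwoPi ((m * k : ℤ) + m * (a + d) / c) := by
        rw [mul_right_comm, hk]
        push_cast
        ring_nf
    _ = eTwoPi (m * (a + d) / c) := eTwoPi_intCast_add _ _

theorem vardi_identity_general (m c : ℕ) :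
    ∑ a ∈ (Finset.Ico 1 c).filter (fun a => Nat.gcd a c = 1),
      eTwoPi (12 * m * dedekindSum a c)
    = kloosterman m m c := by
  refine sum_congr rfl fun a ha => ?_
  obtain ⟨⟨-, hac⟩, hcop⟩ : (1 ≤ a ∧ a < c) ∧ a.gcd c = 1 := by simpa using ha
  have : NeZero c := ⟨by omega⟩
  have had : (a : ℤ) * ((a : ZMod c)⁻¹.val : ℕ) ≡ 1 [ZMOD c] := by
    rw [← ZMod.intCast_eq_intCast_iff]
    push_cast
    rw [ZMod.natCast_zmod_val, ZMod.coe_mul_inv_eq_one a hcop]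
  have hterm := eTwoPi_twelve_mul_dedekindSum m (by omega) had
  push_cast at hterm ⊢
  rw [hterm]
  congr 1
  ring

theorem vardi_identity (m c : ℕ) (hm : 0 < m) (hc : 0 < c) :
    ∑ a ∈ (Finset.Ico 1 c).filter (fun a => Nat.gcd a c = 1),
      eTwoPi (12 * m * dedekindSum a c)
    = kloosterman m m c :=
  vardi_identity_general m c
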